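/- arXiv:2311.03645 — 4 statements merged into one kernel-verified Lean document; each statement's English description precedes it below -/
import Mathlib

section
/- Suppose f : ℕ → ℕ satisfies f(n) ≥ (n/(n-5)) * f(n-1) for all n > 5 (as rationals). If f(2m-1) ≥ C(m,5) + C(m-1,5) for some m > 5, and f(2m) ≤ 2*C(m,5), then f(2m) = 2*C(m,5). -/
theorem odd_even_implication (f : ℕ → ℕ)
    (hf : ∀ n : ℕ, 5 < n → ((n : ℚ) / ((n : ℚ) - 5)) * (f (n - 1) : ℚ) ≤ (f n : ℚ))
    (m : ℕ) (hm : 5 < m)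
    (hodd : m.choose 5 + (m - 1).choose 5 ≤ f (2 * m - 1))
    (heven : f (2 * m) ≤ 2 * m.choose 5) :
    f (2 * m) = 2 * m.choose 5 := by
  have h2m : 5 < 2 * m := by omega
  have h := hf (2 * m) h2m
  have hmQ : (5 : ℚ) < (2 * m : ℕ) := by exact_mod_cast h2m
  have hd : (0 : ℚ) < ((2 * m : ℕ) : ℚ) - 5 := by linarith
  have hodd' : ((m.choose 5 : ℚ) + ((m - 1).choose 5 : ℚ)) ≤ (f (2 * m - 1) : ℚ) := by
    exact_mod_cast hodd
  -- key identity: m * C(m-1,5) = (m-5) * C(m,5)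
  have hnat : m * (m - 1).choose 5 = m.choose 5 * (m - 5) := by
    have h1 := Nat.add_one_mul_choose_eq (m - 1) 5
    have h2 := Nat.choose_succ_right_eq m 5
    have hm1 : m - 1 + 1 = m := by omega
    simp only [Nat.succ_eq_add_one, hm1] at h1
    omega
  have key : (m : ℚ) * ((m - 1).choose 5 : ℚ) = ((m : ℚ) - 5) * (m.choose 5 : ℚ) := by
    have h5 : ((m - 5 : ℕ) : ℚ) = (m : ℚ) - 5 := by
      have : 5 ≤ m := by omega
      push_cast [this]; ring
    have := congrArg (fun k : ℕ => (k : ℚ)) hnat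
    push_cast at this
    rw [h5] at this
    linarith
  -- lower bound
  have hlow : (2 * m.choose 5 : ℚ) ≤ (f (2 * m) : ℚ) := by
    have hmul : (((2 * m : ℕ) : ℚ) / (((2 * m : ℕ) : ℚ) - 5)) * ((m.choose 5 : ℚ) + ((m - 1).choose 5 : ℚ))
        ≤ (((2 * m : ℕ) : ℚ) / (((2 * m : ℕ) : ℚ) - 5)) * (f (2 * m - 1) : ℚ) := by
      apply mul_le_mul_of_nonneg_left hodd'
      positivity
    have heq : (((2 * m : ℕ) : ℚ) / (((2 * m : ℕ) : ℚ) - 5)) * ((m.choose 5 : ℚ) + ((m - 1).choose 5 : ℚ))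
        = 2 * (m.choose 5 : ℚ) := by
      rw [div_mul_eq_mul_div, div_eq_iff (ne_of_gt hd)]
      push_cast
      ring_nf
      nlinarith [key]
    linarith
  have : (2 * m.choose 5 : ℚ) ≤ ((f (2 * m) : ℕ) : ℚ) := hlow
  have hle : 2 * m.choose 5 ≤ f (2 * m) := by exact_mod_cast this
  omega
end

section
/- For any four points p₁, p₂, p₃, p₄ in ℝ² with strictly increasing x-coordinates, letting σ(i,j,k) denote the orientation predicate (y_k - y_i)(x_j - x_i) > (x_k - x_i)(y_j - y_i), the clause (σ(1,2,3) ∨ ¬σ(1,2,4) ∨ σ(1,3,4)) holds, assuming no three of the points are collinear. -/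
/-- Orientation predicate: `(p, q, r)` appear in counterclockwise order. -/
def Sigma' (p q r : ℝ × ℝ) : Prop :=
  (r.2 - p.2) * (q.1 - p.1) > (r.1 - p.1) * (q.2 - p.2)

theorem signotope_axiom_one (p₁ p₂ p₃ p₄ : ℝ × ℝ)
    (h12 : p₁.1 < p₂.1) (h23 : p₂.1 < p₃.1) (h34 : p₃.1 < p₄.1)
    (h123 : (p₃.2 - p₁.2) * (p₂.1 - p₁.1) - (p₃.1 - p₁.1) * (p₂.2 - p₁.2) ≠ 0)
    (h124 : (p₄.2 - p₁.2) * (p₂.1 - p₁.1) - (p₄.1 - p₁.1) * (p₂.2 - p₁.2) ≠ 0)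
    (h134 : (p₄.2 - p₁.2) * (p₃.1 - p₁.1) - (p₄.1 - p₁.1) * (p₃.2 - p₁.2) ≠ 0)
    (h234 : (p₄.2 - p₂.2) * (p₃.1 - p₂.1) - (p₄.1 - p₂.1) * (p₃.2 - p₂.2) ≠ 0) :
    Sigma' p₁ p₂ p₃ ∨ ¬ Sigma' p₁ p₂ p₄ ∨ Sigma' p₁ p₃ p₄ := by
  by_contra h
  push_neg at h
  obtain ⟨h1, h2, h3⟩ := h
  simp only [Sigma', not_lt, gt_iff_lt] at h1 h2 h3
  have hd123 : (p₃.2 - p₁.2) * (p₂.1 - p₁.1) - (p₃.1 - p₁.1) * (p₂.2 - p₁.2) < 0 :=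
    lt_of_le_of_ne (by linarith) h123
  have hd134 : (p₄.2 - p₁.2) * (p₃.1 - p₁.1) - (p₄.1 - p₁.1) * (p₃.2 - p₁.2) < 0 :=
    lt_of_le_of_ne (by linarith) h134
  have hd124 : (p₄.2 - p₁.2) * (p₂.1 - p₁.1) - (p₄.1 - p₁.1) * (p₂.2 - p₁.2) > 0 := by
    linarith
  nlinarith [mul_neg_of_pos_of_neg (sub_pos.2 h12) hd134,
    mul_neg_of_pos_of_neg (sub_pos.2 (h12.trans (h23.trans h34))) hd123,
    mul_pos (sub_pos.2 (h12.trans h23)) hd124]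
end

section
/- The number of convex pentagons determined by the parabolic construction on n points equals C(⌊n/2⌋, 5) + C(⌈n/2⌉, 5). -/
open scoped Classical


lemma bary_mem (a b c d : ℝ × ℝ)
    (hD : (c.1-a.1)*(d.2-a.2)-(d.1-a.1)*(c.2-a.2) ≠ 0)
    (h1 : 0 ≤ ((c.1-b.1)*(d.2-b.2)-(d.1-b.1)*(c.2-b.2)) / ((c.1-a.1)*(d.2-a.2)-(d.1-a.1)*(c.2-a.2)))
    (h2 : 0 ≤ ((b.1-a.1)*(d.2-a.2)-(d.1-a.1)*(b.2-a.2)) / ((c.1-a.1)*(d.2-a.2)-(d.1-a.1)*(c.2-a.2)))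
    (h3 : 0 ≤ ((c.1-a.1)*(b.2-a.2)-(b.1-a.1)*(c.2-a.2)) / ((c.1-a.1)*(d.2-a.2)-(d.1-a.1)*(c.2-a.2))) :
    b ∈ convexHull ℝ ({a, c, d} : Set (ℝ × ℝ)) := by
  set Δ := (c.1-a.1)*(d.2-a.2)-(d.1-a.1)*(c.2-a.2) with hΔdef
  set α := ((c.1-b.1)*(d.2-b.2)-(d.1-b.1)*(c.2-b.2)) / Δ with hα
  set β := ((b.1-a.1)*(d.2-a.2)-(d.1-a.1)*(b.2-a.2)) / Δ with hβ
  set γ := ((c.1-a.1)*(b.2-a.2)-(b.1-a.1)*(c.2-a.2)) / Δ with hγ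
  have hsum : α + β + γ = 1 := by
    rw [hα, hβ, hγ]; field_simp; ring
  have hb1 : b.1 = α * a.1 + β * c.1 + γ * d.1 := by
    rw [hα, hβ, hγ]; field_simp; ring
  have hb2 : b.2 = α * a.2 + β * c.2 + γ * d.2 := by
    rw [hα, hβ, hγ]; field_simp; ring
  have hb : b = α • a + β • c + γ • d := by
    ext
    · simpa using hb1
    · simpa using hb2
  have := Finset.centerMass_mem_convexHull (Finset.univ : Finset (Fin 3))
    (w := ![α, β, γ]) (z := ![a, c, d]) ?_ ?_ ?_ (s := ({a, c, d} : Set (ℝ × ℝ)))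
  · rw [Finset.centerMass_eq_of_sum_1, Fin.sum_univ_three] at this
    · simp only [Matrix.cons_val_zero, Matrix.cons_val_one, Matrix.head_cons,
        Matrix.cons_val_two, Matrix.tail_cons] at this
      rwa [← hb] at this
    · rw [Fin.sum_univ_three]; simpa using hsum
  · intro i _
    fin_cases i
    · simpa using h1
    · simpa using h2
    · simpa using h3
  · rw [Fin.sum_univ_three]; simp only [Matrix.cons_val_zero, Matrix.cons_val_one,
      Matrix.head_cons, Matrix.cons_val_two, Matrix.tail_cons]
    rw [hsum]; norm_num
  · intro i _
    fin_cases i <;> simp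

lemma det_top_neg (N p q r : ℝ) (hN : 1 ≤ N) (hp : 1 ≤ p) (hpq : p < q)
    (hq : q ≤ (N+1)/2) (hr1 : 1 ≤ r) (hr2 : r ≤ (N+1)/2) :
    (q-p)*((-2-r^2/N^2)-(2+p^2/N^2)) - (r-p)*((2+q^2/N^2)-(2+p^2/N^2)) < 0 := by
  have hN0 : (0:ℝ) < N^2 := by positivity
  have hqp : (0:ℝ) < q - p := sub_pos.2 hpq
  have key : (q-p)*(-4*N^2 - r^2 - p^2) - (r-p)*(q^2-p^2) < 0 := by
    have hsum : q + p ≤ N + 1 := by linarith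
    have h2 : r - p ≤ (N-1)/2 := by linarith
    have h3 : p - r ≤ (N-1)/2 := by linarith
    have hq2 : q^2 - p^2 ≤ (N+1)*(q-p) := by nlinarith
    have hq2' : 0 ≤ q^2 - p^2 := by nlinarith
    have bound : -((N-1)/2 * ((N+1)*(q-p))) ≤ (r-p)*(q^2-p^2) := by nlinarith
    nlinarith [mul_pos hqp hN0, sq_nonneg r, sq_nonneg p, mul_pos hqp (mul_pos hN0 hN0)]
  have expand : (q-p)*((-2-r^2/N^2)-(2+p^2/N^2)) - (r-p)*((2+q^2/N^2)-(2+p^2/N^2))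
      = ((q-p)*(-4*N^2 - r^2 - p^2) - (r-p)*(q^2-p^2)) / N^2 := by
    have hNne : N ≠ 0 := by positivity
    field_simp
    ring_nf
  rw [expand]
  exact div_neg_of_neg_of_pos key hN0
lemma mid_mem_top (N p s q r : ℝ) (hN : 1 ≤ N) (hp : 1 ≤ p) (hps : p < s) (hsq : s < q)
    (hq : q ≤ (N+1)/2) (hr1 : 1 ≤ r) (hr2 : r ≤ (N+1)/2) :
    ((s, 2+s^2/N^2) : ℝ×ℝ) ∈ convexHull ℝ
      ({(p, 2+p^2/N^2), (q, 2+q^2/N^2), (r, -2-r^2/N^2)} : Set (ℝ×ℝ)) := by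
  have hD := det_top_neg N p q r hN hp (hps.trans hsq) hq hr1 hr2
  have h1 := det_top_neg N s q r hN (by linarith) hsq hq hr1 hr2
  have h2 := det_top_neg N p s r hN hp hps (by linarith) hr1 hr2
  have h3 : (q-p)*((2+s^2/N^2)-(2+p^2/N^2)) - (s-p)*((2+q^2/N^2)-(2+p^2/N^2)) < 0 := by
    have hN0 : (0:ℝ) < N^2 := by positivity
    have hNne : N ≠ 0 := by positivity
    have heq : (q-p)*((2+s^2/N^2)-(2+p^2/N^2)) - (s-p)*((2+q^2/N^2)-(2+p^2/N^2))
        = (q-p)*(s-p)*(s-q)/N^2 := by field_simp; ring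
    rw [heq]
    apply div_neg_of_neg_of_pos _ hN0
    nlinarith [mul_pos (sub_pos.2 (hps.trans hsq)) (sub_pos.2 hps), sub_neg.2 hsq]
  apply bary_mem <;> dsimp only
  · exact ne_of_lt hD
  · exact le_of_lt (div_pos_of_neg_of_neg h1 hD)
  · exact le_of_lt (div_pos_of_neg_of_neg h2 hD)
  · exact le_of_lt (div_pos_of_neg_of_neg h3 hD)
lemma mid_mem_bot (N p s q r : ℝ) (hN : 1 ≤ N) (hp : 1 ≤ p) (hps : p < s) (hsq : s < q)
    (hq : q ≤ (N+1)/2) (hr1 : 1 ≤ r) (hr2 : r ≤ (N+1)/2) :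
    ((s, -2-s^2/N^2) : ℝ×ℝ) ∈ convexHull ℝ
      ({(p, -2-p^2/N^2), (q, -2-q^2/N^2), (r, 2+r^2/N^2)} : Set (ℝ×ℝ)) := by
  have hDt := det_top_neg N p q r hN hp (hps.trans hsq) hq hr1 hr2
  have h1t := det_top_neg N s q r hN (by linarith) hsq hq hr1 hr2
  have h2t := det_top_neg N p s r hN hp hps (by linarith) hr1 hr2
  have hD : (0:ℝ) < (q-p)*((2+r^2/N^2)-(-2-p^2/N^2)) - (r-p)*((-2-q^2/N^2)-(-2-p^2/N^2)) := by
    have : (q-p)*((2+r^2/N^2)-(-2-p^2/N^2)) - (r-p)*((-2-q^2/N^2)-(-2-p^2/N^2))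
        = -((q-p)*((-2-r^2/N^2)-(2+p^2/N^2)) - (r-p)*((2+q^2/N^2)-(2+p^2/N^2))) := by ring
    rw [this]; linarith
  have h1 : (0:ℝ) < (q-s)*((2+r^2/N^2)-(-2-s^2/N^2)) - (r-s)*((-2-q^2/N^2)-(-2-s^2/N^2)) := by
    have : (q-s)*((2+r^2/N^2)-(-2-s^2/N^2)) - (r-s)*((-2-q^2/N^2)-(-2-s^2/N^2))
        = -((q-s)*((-2-r^2/N^2)-(2+s^2/N^2)) - (r-s)*((2+q^2/N^2)-(2+s^2/N^2))) := by ring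
    rw [this]; linarith
  have h2 : (0:ℝ) < (s-p)*((2+r^2/N^2)-(-2-p^2/N^2)) - (r-p)*((-2-s^2/N^2)-(-2-p^2/N^2)) := by
    have : (s-p)*((2+r^2/N^2)-(-2-p^2/N^2)) - (r-p)*((-2-s^2/N^2)-(-2-p^2/N^2))
        = -((s-p)*((-2-r^2/N^2)-(2+p^2/N^2)) - (r-p)*((2+s^2/N^2)-(2+p^2/N^2))) := by ring
    rw [this]; linarith
  have h3 : (0:ℝ) < (q-p)*((-2-s^2/N^2)-(-2-p^2/N^2)) - (s-p)*((-2-q^2/N^2)-(-2-p^2/N^2)) := by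
    have hN0 : (0:ℝ) < N^2 := by positivity
    have hNne : N ≠ 0 := by positivity
    have heq : (q-p)*((-2-s^2/N^2)-(-2-p^2/N^2)) - (s-p)*((-2-q^2/N^2)-(-2-p^2/N^2))
        = -((q-p)*(s-p)*(s-q))/N^2 := by field_simp; ring
    rw [heq]
    apply div_pos _ hN0
    nlinarith [mul_pos (sub_pos.2 (hps.trans hsq)) (sub_pos.2 hps), sub_neg.2 hsq]
  apply bary_mem <;> dsimp only
  · exact ne_of_gt hD
  · exact (div_pos h1 hD).le
  · exact (div_pos h2 hD).le
  · exact (div_pos h3 hD).le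

lemma curve_vertex_top (N : ℝ) (hN : 0 < N) (T : Finset (ℝ×ℝ))
    (hT : ∀ z ∈ T, ∃ x : ℝ, z = (x, 2 + x^2/N^2)) (p : ℝ×ℝ) (hp : p ∈ T) :
    p ∉ convexHull ℝ ((T.erase p : Finset (ℝ×ℝ)) : Set (ℝ×ℝ)) := by
  obtain ⟨x0, hx0⟩ := hT p hp
  set f : ℝ×ℝ → ℝ := fun z => z.2 - (2*x0/N^2) * z.1 with hf
  have hNne : N ≠ 0 := ne_of_gt hN
  have hlin : IsLinearMap ℝ f := by
    constructor
    · intro u v; simp [hf]; ring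
    · intro c u; simp [hf]; ring
  have hsub : ((T.erase p : Finset (ℝ×ℝ)) : Set (ℝ×ℝ)) ⊆ {w | f p < f w} := by
    intro z hz
    simp only [Finset.coe_erase, Set.mem_diff, Set.mem_singleton_iff, Finset.mem_coe] at hz
    obtain ⟨x, hx⟩ := hT z hz.1
    have hxne : x ≠ x0 := by
      intro h; exact hz.2 (by rw [hx, h, ← hx0])
    have : f z - f p = (x - x0)^2 / N^2 := by
      rw [hx, hx0, hf]; dsimp only; field_simp; ring
    have hsub0 : x - x0 ≠ 0 := sub_ne_zero.2 hxne
    have hpos : 0 < (x - x0)^2 / N^2 := by positivity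
    show f p < f z
    have h' : 0 < f z - f p := by rw [this]; exact hpos
    exact sub_pos.mp h'
  intro hmem
  exact lt_irrefl (f p) (convexHull_min hsub (convex_halfSpace_gt hlin (f p)) hmem)

lemma curve_vertex_bot (N : ℝ) (hN : 0 < N) (T : Finset (ℝ×ℝ))
    (hT : ∀ z ∈ T, ∃ x : ℝ, z = (x, -2 - x^2/N^2)) (p : ℝ×ℝ) (hp : p ∈ T) :
    p ∉ convexHull ℝ ((T.erase p : Finset (ℝ×ℝ)) : Set (ℝ×ℝ)) := by
  obtain ⟨x0, hx0⟩ := hT p hp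
  set f : ℝ×ℝ → ℝ := fun z => z.2 + (2*x0/N^2) * z.1 with hf
  have hNne : N ≠ 0 := ne_of_gt hN
  have hlin : IsLinearMap ℝ f := by
    constructor
    · intro u v; simp [hf]; ring
    · intro c u; simp [hf]; ring
  have hsub : ((T.erase p : Finset (ℝ×ℝ)) : Set (ℝ×ℝ)) ⊆ {w | f w < f p} := by
    intro z hz
    simp only [Finset.coe_erase, Set.mem_diff, Set.mem_singleton_iff, Finset.mem_coe] at hz
    obtain ⟨x, hx⟩ := hT z hz.1
    have hxne : x ≠ x0 := by
      intro h; exact hz.2 (by rw [hx, h, ← hx0])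
    have : f p - f z = (x - x0)^2 / N^2 := by
      rw [hx, hx0, hf]; dsimp only; field_simp; ring
    have hsub0 : x - x0 ≠ 0 := sub_ne_zero.2 hxne
    have hpos : 0 < (x - x0)^2 / N^2 := by positivity
    show f z < f p
    have h' : 0 < f p - f z := by rw [this]; exact hpos
    exact sub_pos.mp h'
  intro hmem
  exact lt_irrefl (f p) (convexHull_min hsub (convex_halfSpace_lt hlin (f p)) hmem)

open scoped Classical

section helpers
variable (n : ℕ)

lemma pent_mixed_top (hn : 1 ≤ n) (T : Finset (ℝ × ℝ))
    (hT3 : 3 ≤ (T ∩ ((Finset.Icc 1 (n / 2)).image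
        (fun i : ℕ => (((i : ℝ), 2 + (i : ℝ) ^ 2 / (n : ℝ) ^ 2) : ℝ × ℝ)))).card)
    (hTB : (T ∩ ((Finset.Icc 1 ((n + 1) / 2)).image
        (fun i : ℕ => (((i : ℝ), -2 - (i : ℝ) ^ 2 / (n : ℝ) ^ 2) : ℝ × ℝ)))).Nonempty) :
    ∃ p ∈ T, p ∈ convexHull ℝ ((T.erase p : Finset (ℝ × ℝ)) : Set (ℝ × ℝ)) := by
  classical
  set f : ℕ → ℝ × ℝ := fun i => (((i : ℝ), 2 + (i : ℝ) ^ 2 / (n : ℝ) ^ 2) : ℝ × ℝ) with hfdef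
  set g : ℕ → ℝ × ℝ := fun i => (((i : ℝ), -2 - (i : ℝ) ^ 2 / (n : ℝ) ^ 2) : ℝ × ℝ) with hgdef
  set I : Finset ℕ := (Finset.Icc 1 (n / 2)).filter (fun i => f i ∈ T) with hIdef
  have hsub : T ∩ ((Finset.Icc 1 (n / 2)).image f) ⊆ I.image f := by
    intro z hz
    rw [Finset.mem_inter] at hz
    obtain ⟨i, hi, rfl⟩ := Finset.mem_image.1 hz.2
    exact Finset.mem_image.2 ⟨i, Finset.mem_filter.2 ⟨hi, hz.1⟩, rfl⟩
  have hI3 : 3 ≤ I.card := le_trans (le_trans hT3 (Finset.card_le_card hsub))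
    (Finset.card_image_le)
  have hne : I.Nonempty := Finset.card_pos.1 (by omega)
  set i := I.min' hne with hi
  set k := I.max' hne with hk
  have hik : i < k := I.min'_lt_max'_of_card (by omega)
  have hkmem : k ∈ I.erase i := Finset.mem_erase.2 ⟨Ne.symm (ne_of_lt hik), I.max'_mem hne⟩
  have hJcard : 1 ≤ ((I.erase i).erase k).card := by
    have h1 : (I.erase i).card = I.card - 1 := Finset.card_erase_of_mem (I.min'_mem hne)
    have h2 : ((I.erase i).erase k).card = (I.erase i).card - 1 :=
      Finset.card_erase_of_mem hkmem
    omega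
  obtain ⟨j, hj⟩ := Finset.card_pos.1 (by omega : 0 < ((I.erase i).erase k).card)
  have hjI : j ∈ I := Finset.mem_of_mem_erase (Finset.mem_of_mem_erase hj)
  have hjne_k : j ≠ k := (Finset.mem_erase.1 hj).1
  have hjne_i : j ≠ i := (Finset.mem_erase.1 (Finset.mem_of_mem_erase hj)).1
  have hij : i < j := lt_of_le_of_ne (I.min'_le j hjI) (Ne.symm hjne_i)
  have hjk : j < k := lt_of_le_of_ne (I.le_max' j hjI) hjne_k
  obtain ⟨d, hd⟩ := hTB
  rw [Finset.mem_inter] at hd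
  obtain ⟨m, hm, hdg⟩ := Finset.mem_image.1 hd.2
  have hiT : f i ∈ T := (Finset.mem_filter.1 (I.min'_mem hne)).2
  have hkT : f k ∈ T := (Finset.mem_filter.1 (I.max'_mem hne)).2
  have hjT : f j ∈ T := (Finset.mem_filter.1 hjI).2
  have hiIcc := Finset.mem_Icc.1 (Finset.mem_filter.1 (I.min'_mem hne)).1
  have hkIcc := Finset.mem_Icc.1 (Finset.mem_filter.1 (I.max'_mem hne)).1
  have hmIcc := Finset.mem_Icc.1 hm
  have hN1 : (1:ℝ) ≤ (n:ℝ) := by exact_mod_cast hn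
  have hmain := mid_mem_top (n:ℝ) (i:ℝ) (j:ℝ) (k:ℝ) (m:ℝ) hN1
    (by exact_mod_cast hiIcc.1) (by exact_mod_cast hij) (by exact_mod_cast hjk)
    (by have h' : ((2*k:ℕ):ℝ) ≤ ((n:ℕ):ℝ) := Nat.cast_le.2 (by omega)
        push_cast at h' ⊢; linarith)
    (by exact_mod_cast hmIcc.1)
    (by have h' : ((2*m:ℕ):ℝ) ≤ ((n+1:ℕ):ℝ) := Nat.cast_le.2 (by omega)
        push_cast at h' ⊢; linarith)
  refine ⟨f j, hjT, ?_⟩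
  have hy : (0:ℝ) < 2 + (j:ℝ)^2/(n:ℝ)^2 := by positivity
  have hsubset : ({((i:ℝ), 2+(i:ℝ)^2/(n:ℝ)^2), ((k:ℝ), 2+(k:ℝ)^2/(n:ℝ)^2),
      ((m:ℝ), -2-(m:ℝ)^2/(n:ℝ)^2)} : Set (ℝ × ℝ)) ⊆
      ((T.erase (f j) : Finset (ℝ × ℝ)) : Set (ℝ × ℝ)) := by
    intro z hz
    simp only [Set.mem_insert_iff, Set.mem_singleton_iff] at hz
    rcases hz with rfl | rfl | rfl
    · refine Finset.mem_coe.2 (Finset.mem_erase.2 ⟨?_, hiT⟩)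
      intro h
      have := congrArg Prod.fst h
      simp only [hfdef] at this
      have : (i:ℝ) = (j:ℝ) := this
      exact hjne_i (Nat.cast_injective this).symm
    · refine Finset.mem_coe.2 (Finset.mem_erase.2 ⟨?_, hkT⟩)
      intro h
      have := congrArg Prod.fst h
      simp only [hfdef] at this
      have : (k:ℝ) = (j:ℝ) := this
      exact hjne_k (Nat.cast_injective this).symm
    · refine Finset.mem_coe.2 (Finset.mem_erase.2 ⟨?_, (show g m ∈ T by rw [hdg]; exact hd.1 : (((m:ℝ), -2-(m:ℝ)^2/(n:ℝ)^2) : ℝ×ℝ) ∈ T)⟩)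
      intro h
      have h2 := congrArg Prod.snd h
      simp only [hfdef, hgdef] at h2
      have hy2 : (0:ℝ) < 2 + (m:ℝ)^2/(n:ℝ)^2 := by positivity
      have : -2 - (m:ℝ)^2/(n:ℝ)^2 = 2 + (j:ℝ)^2/(n:ℝ)^2 := h2
      linarith
  exact convexHull_mono hsubset hmain

lemma pent_mixed_bot (hn : 1 ≤ n) (T : Finset (ℝ × ℝ))
    (hT3 : 3 ≤ (T ∩ ((Finset.Icc 1 ((n + 1) / 2)).image
        (fun i : ℕ => (((i : ℝ), -2 - (i : ℝ) ^ 2 / (n : ℝ) ^ 2) : ℝ × ℝ)))).card)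
    (hTA : (T ∩ ((Finset.Icc 1 (n / 2)).image
        (fun i : ℕ => (((i : ℝ), 2 + (i : ℝ) ^ 2 / (n : ℝ) ^ 2) : ℝ × ℝ)))).Nonempty) :
    ∃ p ∈ T, p ∈ convexHull ℝ ((T.erase p : Finset (ℝ × ℝ)) : Set (ℝ × ℝ)) := by
  classical
  set f : ℕ → ℝ × ℝ := fun i => (((i : ℝ), 2 + (i : ℝ) ^ 2 / (n : ℝ) ^ 2) : ℝ × ℝ) with hfdef
  set g : ℕ → ℝ × ℝ := fun i => (((i : ℝ), -2 - (i : ℝ) ^ 2 / (n : ℝ) ^ 2) : ℝ × ℝ) with hgdef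
  set I : Finset ℕ := (Finset.Icc 1 ((n+1) / 2)).filter (fun i => g i ∈ T) with hIdef
  have hsub : T ∩ ((Finset.Icc 1 ((n+1) / 2)).image g) ⊆ I.image g := by
    intro z hz
    rw [Finset.mem_inter] at hz
    obtain ⟨i, hi, rfl⟩ := Finset.mem_image.1 hz.2
    exact Finset.mem_image.2 ⟨i, Finset.mem_filter.2 ⟨hi, hz.1⟩, rfl⟩
  have hI3 : 3 ≤ I.card := le_trans (le_trans hT3 (Finset.card_le_card hsub))
    (Finset.card_image_le)
  have hne : I.Nonempty := Finset.card_pos.1 (by omega)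
  set i := I.min' hne with hi
  set k := I.max' hne with hk
  have hik : i < k := I.min'_lt_max'_of_card (by omega)
  have hkmem : k ∈ I.erase i := Finset.mem_erase.2 ⟨Ne.symm (ne_of_lt hik), I.max'_mem hne⟩
  have hJcard : 1 ≤ ((I.erase i).erase k).card := by
    have h1 : (I.erase i).card = I.card - 1 := Finset.card_erase_of_mem (I.min'_mem hne)
    have h2 : ((I.erase i).erase k).card = (I.erase i).card - 1 :=
      Finset.card_erase_of_mem hkmem
    omega
  obtain ⟨j, hj⟩ := Finset.card_pos.1 (by omega : 0 < ((I.erase i).erase k).card)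
  have hjI : j ∈ I := Finset.mem_of_mem_erase (Finset.mem_of_mem_erase hj)
  have hjne_k : j ≠ k := (Finset.mem_erase.1 hj).1
  have hjne_i : j ≠ i := (Finset.mem_erase.1 (Finset.mem_of_mem_erase hj)).1
  have hij : i < j := lt_of_le_of_ne (I.min'_le j hjI) (Ne.symm hjne_i)
  have hjk : j < k := lt_of_le_of_ne (I.le_max' j hjI) hjne_k
  obtain ⟨d, hd⟩ := hTA
  rw [Finset.mem_inter] at hd
  obtain ⟨m, hm, hdg⟩ := Finset.mem_image.1 hd.2
  have hiT : g i ∈ T := (Finset.mem_filter.1 (I.min'_mem hne)).2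
  have hkT : g k ∈ T := (Finset.mem_filter.1 (I.max'_mem hne)).2
  have hjT : g j ∈ T := (Finset.mem_filter.1 hjI).2
  have hiIcc := Finset.mem_Icc.1 (Finset.mem_filter.1 (I.min'_mem hne)).1
  have hkIcc := Finset.mem_Icc.1 (Finset.mem_filter.1 (I.max'_mem hne)).1
  have hmIcc := Finset.mem_Icc.1 hm
  have hN1 : (1:ℝ) ≤ (n:ℝ) := by exact_mod_cast hn
  have hmain := mid_mem_bot (n:ℝ) (i:ℝ) (j:ℝ) (k:ℝ) (m:ℝ) hN1
    (by exact_mod_cast hiIcc.1) (by exact_mod_cast hij) (by exact_mod_cast hjk)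
    (by have h' : ((2*k:ℕ):ℝ) ≤ ((n+1:ℕ):ℝ) := Nat.cast_le.2 (by omega)
        push_cast at h' ⊢; linarith)
    (by exact_mod_cast hmIcc.1)
    (by have h' : ((2*m:ℕ):ℝ) ≤ ((n:ℕ):ℝ) := Nat.cast_le.2 (by omega)
        push_cast at h' ⊢; linarith)
  refine ⟨g j, hjT, ?_⟩
  have hsubset : ({((i:ℝ), -2-(i:ℝ)^2/(n:ℝ)^2), ((k:ℝ), -2-(k:ℝ)^2/(n:ℝ)^2),
      ((m:ℝ), 2+(m:ℝ)^2/(n:ℝ)^2)} : Set (ℝ × ℝ)) ⊆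
      ((T.erase (g j) : Finset (ℝ × ℝ)) : Set (ℝ × ℝ)) := by
    intro z hz
    simp only [Set.mem_insert_iff, Set.mem_singleton_iff] at hz
    rcases hz with rfl | rfl | rfl
    · refine Finset.mem_coe.2 (Finset.mem_erase.2 ⟨?_, hiT⟩)
      intro h
      have := congrArg Prod.fst h
      simp only [hgdef] at this
      have : (i:ℝ) = (j:ℝ) := this
      exact hjne_i (Nat.cast_injective this).symm
    · refine Finset.mem_coe.2 (Finset.mem_erase.2 ⟨?_, hkT⟩)
      intro h
      have := congrArg Prod.fst h
      simp only [hgdef] at this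
      have : (k:ℝ) = (j:ℝ) := this
      exact hjne_k (Nat.cast_injective this).symm
    · refine Finset.mem_coe.2 (Finset.mem_erase.2 ⟨?_, (show f m ∈ T by rw [hdg]; exact hd.1 : (((m:ℝ), 2+(m:ℝ)^2/(n:ℝ)^2) : ℝ×ℝ) ∈ T)⟩)
      intro h
      have h2 := congrArg Prod.snd h
      simp only [hfdef, hgdef] at h2
      have hy2 : (0:ℝ) < 2 + (m:ℝ)^2/(n:ℝ)^2 := by positivity
      have hy3 : (0:ℝ) < 2 + (j:ℝ)^2/(n:ℝ)^2 := by positivity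
      have : 2 + (m:ℝ)^2/(n:ℝ)^2 = -2 - (j:ℝ)^2/(n:ℝ)^2 := h2
      linarith
  exact convexHull_mono hsubset hmain

end helpers

theorem parabolic_pentagon_count (n : ℕ) (hn : 1 ≤ n) (S : Finset (ℝ × ℝ))
    (hS : S = ((Finset.Icc 1 (n / 2)).image
                (fun i : ℕ => (((i : ℝ), 2 + (i : ℝ) ^ 2 / (n : ℝ) ^ 2) : ℝ × ℝ))) ∪
              ((Finset.Icc 1 ((n + 1) / 2)).image
                (fun i : ℕ => (((i : ℝ), -2 - (i : ℝ) ^ 2 / (n : ℝ) ^ 2) : ℝ × ℝ)))) :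
    ((S.powersetCard 5).filter
        (fun T => ∀ p ∈ T, p ∉ convexHull ℝ ((T.erase p : Finset (ℝ × ℝ)) : Set (ℝ × ℝ)))).card
      = (n / 2).choose 5 + ((n + 1) / 2).choose 5 := by
  classical
  have hn0 : (0:ℝ) < (n:ℝ) := by exact_mod_cast hn
  set f : ℕ → ℝ × ℝ := fun i : ℕ => (((i : ℝ), 2 + (i : ℝ) ^ 2 / (n : ℝ) ^ 2) : ℝ × ℝ)
    with hfdef
  set g : ℕ → ℝ × ℝ := fun i : ℕ => (((i : ℝ), -2 - (i : ℝ) ^ 2 / (n : ℝ) ^ 2) : ℝ × ℝ)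
    with hgdef
  set A : Finset (ℝ × ℝ) := (Finset.Icc 1 (n / 2)).image f with hAdef
  set B : Finset (ℝ × ℝ) := (Finset.Icc 1 ((n + 1) / 2)).image g with hBdef
  have hfinj : Function.Injective f := by
    intro a b h
    have : ((a:ℝ)) = (b:ℝ) := congrArg Prod.fst h
    exact_mod_cast this
  have hginj : Function.Injective g := by
    intro a b h
    have : ((a:ℝ)) = (b:ℝ) := congrArg Prod.fst h
    exact_mod_cast this
  have hABdisj : Disjoint A B := by
    rw [Finset.disjoint_left]
    intro z hzA hzB
    obtain ⟨i, _, rfl⟩ := Finset.mem_image.1 hzA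
    obtain ⟨j, _, hj⟩ := Finset.mem_image.1 hzB
    have h2 : -2 - (j:ℝ)^2/(n:ℝ)^2 = 2 + (i:ℝ)^2/(n:ℝ)^2 := congrArg Prod.snd hj
    have p1 : (0:ℝ) < 2 + (i:ℝ)^2/(n:ℝ)^2 := by positivity
    have p2 : (0:ℝ) < 2 + (j:ℝ)^2/(n:ℝ)^2 := by positivity
    linarith
  have hcardA : A.card = n / 2 := by
    rw [hAdef, Finset.card_image_of_injective _ hfinj, Nat.card_Icc]; omega
  have hcardB : B.card = (n + 1) / 2 := by
    rw [hBdef, Finset.card_image_of_injective _ hginj, Nat.card_Icc]; omega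
  have hfilter : (S.powersetCard 5).filter
        (fun T => ∀ p ∈ T, p ∉ convexHull ℝ ((T.erase p : Finset (ℝ × ℝ)) : Set (ℝ × ℝ)))
      = A.powersetCard 5 ∪ B.powersetCard 5 := by
    ext T
    simp only [Finset.mem_filter, Finset.mem_powersetCard, Finset.mem_union]
    constructor
    · rintro ⟨⟨hTS, hT5⟩, hP⟩
      rw [hS] at hTS
      by_cases hTA : T ⊆ A
      · exact Or.inl ⟨hTA, hT5⟩
      by_cases hTB : T ⊆ B
      · exact Or.inr ⟨hTB, hT5⟩
      exfalso
      obtain ⟨x, hxT, hxA⟩ := Finset.not_subset.1 hTA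
      obtain ⟨y, hyT, hyB⟩ := Finset.not_subset.1 hTB
      have hxB : x ∈ B := by
        have := hTS hxT
        rw [Finset.mem_union] at this
        tauto
      have hyA : y ∈ A := by
        have := hTS hyT
        rw [Finset.mem_union] at this
        tauto
      have hdisj' : Disjoint (T ∩ A) (T ∩ B) :=
        hABdisj.mono (Finset.inter_subset_right) (Finset.inter_subset_right)
      have hunion : (T ∩ A) ∪ (T ∩ B) = T := by
        rw [← Finset.inter_union_distrib_left, Finset.inter_eq_left.2 hTS]
      have hcardsum : (T ∩ A).card + (T ∩ B).card = 5 := by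
        rw [← Finset.card_union_of_disjoint hdisj', hunion, hT5]
      have hTAne : 1 ≤ (T ∩ A).card :=
        Finset.card_pos.2 ⟨y, Finset.mem_inter.2 ⟨hyT, hyA⟩⟩
      have hTBne : 1 ≤ (T ∩ B).card :=
        Finset.card_pos.2 ⟨x, Finset.mem_inter.2 ⟨hxT, hxB⟩⟩
      rcases (by omega : 3 ≤ (T ∩ A).card ∨ 3 ≤ (T ∩ B).card) with h3 | h3
      · obtain ⟨p, hpT, hmem⟩ := pent_mixed_top n hn T h3
          ⟨x, Finset.mem_inter.2 ⟨hxT, hxB⟩⟩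
        exact hP p hpT hmem
      · obtain ⟨p, hpT, hmem⟩ := pent_mixed_bot n hn T h3
          ⟨y, Finset.mem_inter.2 ⟨hyT, hyA⟩⟩
        exact hP p hpT hmem
    · rintro (⟨hTA, hT5⟩ | ⟨hTB, hT5⟩)
      · refine ⟨⟨?_, hT5⟩, ?_⟩
        · rw [hS]; exact hTA.trans Finset.subset_union_left
        · intro p hp
          apply curve_vertex_top (n:ℝ) hn0 T ?_ p hp
          intro z hz
          obtain ⟨iz, _, rfl⟩ := Finset.mem_image.1 (hTA hz)
          exact ⟨(iz:ℝ), rfl⟩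
      · refine ⟨⟨?_, hT5⟩, ?_⟩
        · rw [hS]; exact hTB.trans Finset.subset_union_right
        · intro p hp
          apply curve_vertex_bot (n:ℝ) hn0 T ?_ p hp
          intro z hz
          obtain ⟨iz, _, rfl⟩ := Finset.mem_image.1 (hTB hz)
          exact ⟨(iz:ℝ), rfl⟩
  have hdisjPow : Disjoint (A.powersetCard 5) (B.powersetCard 5) := by
    rw [Finset.disjoint_left]
    intro T h1 h2
    rw [Finset.mem_powersetCard] at h1 h2
    obtain ⟨x, hx⟩ := Finset.card_pos.1 (by omega : 0 < T.card)
    exact Finset.disjoint_left.1 hABdisj (h1.1 hx) (h2.1 hx)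
  rw [hfilter, Finset.card_union_of_disjoint hdisjPow, Finset.card_powersetCard,
    Finset.card_powersetCard, hcardA, hcardB]
end

section
/- Define μ₅(n) as the minimum over all n-point sets S ⊂ ℝ² in general position of the number of 5-element subsets of S in convex position. Then μ₅(n) ≤ C(⌊n/2⌋,5) + C(⌈n/2⌉,5) for all n. -/
open scoped Classical

/-- A finite point set is in general position: no three distinct points are collinear. -/
def GenPos (S : Finset (ℝ × ℝ)) : Prop :=
  ∀ p ∈ S, ∀ q ∈ S, ∀ r ∈ S, p ≠ q → p ≠ r → q ≠ r →
    ¬ Collinear ℝ ({p, q, r} : Set (ℝ × ℝ))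

/-- The number of 5-element subsets of `S` in convex position. -/
noncomputable def numConvex5 (S : Finset (ℝ × ℝ)) : ℕ :=
  ((S.powersetCard 5).filter
    (fun T => ∀ p ∈ T, p ∉ convexHull ℝ ((T.erase p : Finset (ℝ × ℝ)) : Set (ℝ × ℝ)))).card

/-- The minimum number of convex pentagons among `n` points in general position. -/
noncomputable def mu5 (n : ℕ) : ℕ :=
  sInf {m | ∃ S : Finset (ℝ × ℝ), S.card = n ∧ GenPos S ∧ numConvex5 S = m}


def cross (p q r : ℝ × ℝ) : ℝ := (q.1 - p.1) * (r.2 - p.2) - (r.1 - p.1) * (q.2 - p.2)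

lemma collinear_cross {p q r : ℝ × ℝ} (h : Collinear ℝ ({p,q,r} : Set (ℝ×ℝ))) :
    cross p q r = 0 := by
  obtain ⟨v, hv⟩ := (collinear_iff_of_mem (Set.mem_insert p _)).1 h
  obtain ⟨a, ha⟩ := hv q (by simp)
  obtain ⟨b, hb⟩ := hv r (by simp)
  have ha1 : q.1 = a * v.1 + p.1 := by rw [ha]; rfl
  have ha2 : q.2 = a * v.2 + p.2 := by rw [ha]; rfl
  have hb1 : r.1 = b * v.1 + p.1 := by rw [hb]; rfl
  have hb2 : r.2 = b * v.2 + p.2 := by rw [hb]; rfl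
  simp only [cross, ha1, ha2, hb1, hb2]
  ring

lemma mem_hull3 {P1 P2 P3 p : ℝ × ℝ} {c1 c2 c3 : ℝ}
    (h1 : 0 ≤ c1) (h2 : 0 ≤ c2) (h3 : 0 ≤ c3) (hsum : c1 + c2 + c3 = 1)
    (hx : p.1 = c1 * P1.1 + c2 * P2.1 + c3 * P3.1)
    (hy : p.2 = c1 * P1.2 + c2 * P2.2 + c3 * P3.2) :
    p ∈ convexHull ℝ ({P1, P2, P3} : Set (ℝ × ℝ)) := by
  have := Finset.centerMass_mem_convexHull (t := (Finset.univ : Finset (Fin 3)))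
    (w := ![c1,c2,c3]) (z := ![P1,P2,P3]) (s := ({P1, P2, P3} : Set (ℝ × ℝ)))
    (by intro i _; fin_cases i <;> simpa)
    (by simp [Fin.sum_univ_three, hsum])
    (by intro i _; fin_cases i <;> simp)
  convert this using 1
  simp only [Finset.centerMass, Fin.sum_univ_three, Matrix.cons_val_zero, Matrix.cons_val_one,
    Matrix.head_cons, Matrix.cons_val_two, Matrix.tail_cons, hsum]
  ext <;> simp [hx, hy, Prod.smul_def] <;> ring
noncomputable def Mc (n : ℕ) : ℝ := 100 * (n:ℝ)^3 + 100

lemma brk (n a b c : ℝ) (hn : 1 ≤ n) (ha : 1 ≤ a) (han : a ≤ n) (hb : 1 ≤ b) (hbn : b ≤ n)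
    (hc : 1 ≤ c) (hcn : c ≤ n) :
    0 < a^2 + (100*n^3+100) + b^2 + (a-b)*(c+b) := by
  have h1 : -(2*n^2) ≤ (a-b)*(c+b) := by nlinarith [mul_nonneg (sub_nonneg.2 hbn) (by linarith : (0:ℝ) ≤ c+b), mul_nonneg (sub_nonneg.2 hcn) (by linarith : (0:ℝ) ≤ n - a + 1)]
  nlinarith [sq_nonneg a, sq_nonneg b, sq_nonneg n, mul_le_mul_of_nonneg_left (mul_le_mul_of_nonneg_left hn (by linarith : (0:ℝ) ≤ n)) (by linarith : (0:ℝ) ≤ n)]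

lemma mid_mem_A (n : ℕ) (i j k x : ℝ)
    (hi : 1 ≤ i) (hij : i + 1 ≤ j) (hjk : j + 1 ≤ k) (hk : k ≤ n)
    (hx1 : 1 ≤ x) (hxn : x ≤ n) :
    ((j, -j^2) : ℝ × ℝ) ∈ convexHull ℝ
      ({(i, -i^2), (k, -k^2), (x, x^2 + Mc n)} : Set (ℝ × ℝ)) := by
  have hn : (1:ℝ) ≤ n := le_trans (by linarith) hk
  set m := Mc n with hm
  have hmval : m = 100*(n:ℝ)^3 + 100 := rfl
  set N1 : ℝ := (k-j)*(x^2+m+j^2+(x-j)*(k+j)) with hN1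
  set N2 : ℝ := (j-i)*(x^2+m+j^2+(x-j)*(j+i)) with hN2
  set N3 : ℝ := (j-i)*(k-j)*(k-i) with hN3
  set D : ℝ := (k-i)*(x^2+m+i^2+(x-i)*(k+i)) with hD
  have hb1 : (0:ℝ) < x^2+m+j^2+(x-j)*(k+j) := by
    rw [hmval]; exact brk n x j k hn hx1 hxn (by linarith) (by linarith) (by linarith) hk
  have hb2 : (0:ℝ) < x^2+m+j^2+(x-j)*(j+i) := by
    rw [hmval]
    have := brk n x j i hn hx1 hxn (by linarith) (by linarith) hi (by linarith)
    linarith [this]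
  have hbD : (0:ℝ) < x^2+m+i^2+(x-i)*(k+i) := by
    rw [hmval]; exact brk n x i k hn hx1 hxn hi (by linarith) (by linarith) hk
  have hN1pos : 0 < N1 := mul_pos (by linarith) hb1
  have hN2pos : 0 < N2 := mul_pos (by linarith) hb2
  have hN3pos : 0 < N3 := by apply mul_pos (mul_pos (by linarith) (by linarith)); linarith
  have hDpos : 0 < D := mul_pos (by linarith) hbD
  have hsumN : N1 + N2 + N3 = D := by rw [hN1, hN2, hN3, hD]; ring
  refine mem_hull3 (c1 := N1/D) (c2 := N2/D) (c3 := N3/D)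
    (by positivity) (by positivity) (by positivity) ?_ ?_ ?_
  · field_simp
    linarith
  · show j = N1/D * i + N2/D * k + N3/D * x
    field_simp
    rw [hN1, hN2, hN3, hD]; ring
  · show -j^2 = N1/D * (-i^2) + N2/D * (-k^2) + N3/D * (x^2 + m)
    field_simp
    rw [hN1, hN2, hN3, hD]; ring

lemma mid_mem_B (n : ℕ) (i j k x : ℝ)
    (hi : 1 ≤ i) (hij : i + 1 ≤ j) (hjk : j + 1 ≤ k) (hk : k ≤ n)
    (hx1 : 1 ≤ x) (hxn : x ≤ n) :
    ((j, j^2 + Mc n) : ℝ × ℝ) ∈ convexHull ℝ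
      ({(i, i^2 + Mc n), (k, k^2 + Mc n), (x, -x^2)} : Set (ℝ × ℝ)) := by
  have hn : (1:ℝ) ≤ n := le_trans (by linarith) hk
  set m := Mc n with hm
  have hmval : m = 100*(n:ℝ)^3 + 100 := rfl
  set N1 : ℝ := (k-j)*(x^2+m+j^2+(x-j)*(k+j)) with hN1
  set N2 : ℝ := (j-i)*(x^2+m+j^2+(x-j)*(j+i)) with hN2
  set N3 : ℝ := (j-i)*(k-j)*(k-i) with hN3
  set D : ℝ := (k-i)*(x^2+m+i^2+(x-i)*(k+i)) with hD
  have hb1 : (0:ℝ) < x^2+m+j^2+(x-j)*(k+j) := by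
    rw [hmval]; exact brk n x j k hn hx1 hxn (by linarith) (by linarith) (by linarith) hk
  have hb2 : (0:ℝ) < x^2+m+j^2+(x-j)*(j+i) := by
    rw [hmval]
    have := brk n x j i hn hx1 hxn (by linarith) (by linarith) hi (by linarith)
    linarith [this]
  have hbD : (0:ℝ) < x^2+m+i^2+(x-i)*(k+i) := by
    rw [hmval]; exact brk n x i k hn hx1 hxn hi (by linarith) (by linarith) hk
  have hN1pos : 0 < N1 := mul_pos (by linarith) hb1
  have hN2pos : 0 < N2 := mul_pos (by linarith) hb2
  have hN3pos : 0 < N3 := by apply mul_pos (mul_pos (by linarith) (by linarith)); linarith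
  have hDpos : 0 < D := mul_pos (by linarith) hbD
  have hsumN : N1 + N2 + N3 = D := by rw [hN1, hN2, hN3, hD]; ring
  refine mem_hull3 (c1 := N1/D) (c2 := N2/D) (c3 := N3/D)
    (by positivity) (by positivity) (by positivity) ?_ ?_ ?_
  · field_simp
    linarith
  · show j = N1/D * i + N2/D * k + N3/D * x
    field_simp
    rw [hN1, hN2, hN3, hD]; ring
  · show j^2 + m = N1/D * (i^2+m) + N2/D * (k^2+m) + N3/D * (-x^2)
    field_simp
    rw [hN1, hN2, hN3, hD]; ring
noncomputable def Apt (i : ℕ) : ℝ × ℝ := ((i:ℝ), -(i:ℝ)^2)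
noncomputable def Bpt (n i : ℕ) : ℝ × ℝ := ((i:ℝ), (i:ℝ)^2 + Mc n)

lemma Apt_inj : Function.Injective Apt := by
  intro a b h
  exact Nat.cast_injective (congrArg Prod.fst h)

lemma Bpt_inj (n : ℕ) : Function.Injective (Bpt n) := by
  intro a b h
  exact Nat.cast_injective (congrArg Prod.fst h)

lemma Mc_pos (n : ℕ) : 0 < Mc n := by unfold Mc; positivity

lemma Apt_ne_Bpt (n i j : ℕ) : Apt i ≠ Bpt n j := by
  intro h
  have := congrArg Prod.snd h
  simp only [Apt, Bpt] at this
  nlinarith [Mc_pos n, sq_nonneg ((i:ℝ)), sq_nonneg ((j:ℝ))]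

noncomputable def Aset (n : ℕ) : Finset (ℝ×ℝ) := (Finset.Icc 1 (n/2)).image Apt
noncomputable def Bset (n : ℕ) : Finset (ℝ×ℝ) := (Finset.Icc 1 ((n+1)/2)).image (Bpt n)
noncomputable def Sset (n : ℕ) : Finset (ℝ×ℝ) := Aset n ∪ Bset n

lemma Aset_card (n : ℕ) : (Aset n).card = n / 2 := by
  rw [Aset, Finset.card_image_of_injective _ Apt_inj, Nat.card_Icc]; omega

lemma Bset_card (n : ℕ) : (Bset n).card = (n+1) / 2 := by
  rw [Bset, Finset.card_image_of_injective _ (Bpt_inj n), Nat.card_Icc]; omega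

lemma AB_disj (n : ℕ) : Disjoint (Aset n) (Bset n) := by
  rw [Finset.disjoint_left]
  intro p hp hq
  simp only [Aset, Bset, Finset.mem_image] at hp hq
  obtain ⟨i, _, hi⟩ := hp
  obtain ⟨j, _, hj⟩ := hq
  exact Apt_ne_Bpt n i j (hi.trans hj.symm)

lemma Sset_card (n : ℕ) : (Sset n).card = n := by
  rw [Sset, Finset.card_union_of_disjoint (AB_disj n), Aset_card, Bset_card]
  omega

-- index bounds in real form
lemma idx_bounds {n i : ℕ} (h1 : 1 ≤ i) (h2 : i ≤ (n+1)/2) : (1:ℝ) ≤ (i:ℝ) ∧ (i:ℝ) ≤ (n:ℝ) := by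
  constructor
  · exact_mod_cast h1
  · have : i ≤ n := by omega
    exact_mod_cast this

-- cross nonzero lemmas
lemma nz_AAA {i j k : ℕ} (hij : i ≠ j) (hik : i ≠ k) (hjk : j ≠ k) :
    cross (Apt i) (Apt j) (Apt k) ≠ 0 := by
  have h : cross (Apt i) (Apt j) (Apt k)
      = ((j:ℝ)-i) * ((i:ℝ)-k) * ((k:ℝ)-j) := by
    simp only [cross, Apt]; ring
  rw [h]
  have h1 : (j:ℝ) - i ≠ 0 := sub_ne_zero.2 (by exact_mod_cast hij.symm)
  have h2 : (i:ℝ) - k ≠ 0 := sub_ne_zero.2 (by exact_mod_cast hik)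
  have h3 : (k:ℝ) - j ≠ 0 := sub_ne_zero.2 (by exact_mod_cast hjk.symm)
  exact mul_ne_zero (mul_ne_zero h1 h2) h3

lemma nz_AAB {n i j x : ℕ} (hij : i ≠ j)
    (hi1 : (1:ℝ) ≤ i) (hin : (i:ℝ) ≤ n) (hj1 : (1:ℝ) ≤ j) (hjn : (j:ℝ) ≤ n)
    (hx1 : (1:ℝ) ≤ x) (hxn : (x:ℝ) ≤ n) :
    cross (Apt i) (Apt j) (Bpt n x) ≠ 0 := by
  have h : cross (Apt i) (Apt j) (Bpt n x)
      = ((j:ℝ)-i) * ((x:ℝ)^2 + (100*(n:ℝ)^3+100) + (i:ℝ)^2 + ((x:ℝ)-(i:ℝ))*((j:ℝ)+(i:ℝ))) := by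
    simp only [cross, Apt, Bpt, Mc]; ring
  rw [h]
  have h1 : (j:ℝ) - i ≠ 0 := sub_ne_zero.2 (by exact_mod_cast hij.symm)
  have hn : (1:ℝ) ≤ n := le_trans hi1 hin
  have h2 := brk (n:ℝ) (x:ℝ) (i:ℝ) (j:ℝ) hn hx1 hxn hi1 hin hj1 hjn
  exact mul_ne_zero h1 (by linarith)

lemma nz_ABB {n x j k : ℕ} (hjk : j ≠ k)
    (hj1 : (1:ℝ) ≤ j) (hjn : (j:ℝ) ≤ n) (hk1 : (1:ℝ) ≤ k) (hkn : (k:ℝ) ≤ n)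
    (hx1 : (1:ℝ) ≤ x) (hxn : (x:ℝ) ≤ n) :
    cross (Apt x) (Bpt n j) (Bpt n k) ≠ 0 := by
  have h : cross (Apt x) (Bpt n j) (Bpt n k)
      = ((j:ℝ)-k) * ((100*(n:ℝ)^3+100) + (x:ℝ)^2 + (x:ℝ)*(j:ℝ) + (x:ℝ)*(k:ℝ) - (j:ℝ)*(k:ℝ)) := by
    simp only [cross, Apt, Bpt, Mc]; ring
  rw [h]
  have h1 : (j:ℝ) - k ≠ 0 := sub_ne_zero.2 (by exact_mod_cast hjk)
  have hn : (1:ℝ) ≤ n := le_trans hj1 hjn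
  have hb : (0:ℝ) < (100*(n:ℝ)^3+100) + (x:ℝ)^2 + (x:ℝ)*(j:ℝ) + (x:ℝ)*(k:ℝ) - (j:ℝ)*(k:ℝ) := by
    nlinarith [mul_le_mul hjn hkn (by linarith : (0:ℝ) ≤ (k:ℝ)) (by linarith : (0:ℝ) ≤ (n:ℝ)),
      mul_nonneg (by linarith : (0:ℝ) ≤ (x:ℝ)) (by linarith : (0:ℝ) ≤ (j:ℝ)),
      mul_nonneg (by linarith : (0:ℝ) ≤ (x:ℝ)) (by linarith : (0:ℝ) ≤ (k:ℝ)),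
      sq_nonneg ((x:ℝ)), mul_le_mul_of_nonneg_left (mul_le_mul_of_nonneg_left hn (by linarith : (0:ℝ) ≤ (n:ℝ))) (by linarith : (0:ℝ) ≤ (n:ℝ))]
  exact mul_ne_zero h1 (by linarith)

lemma nz_BBB {n i j k : ℕ} (hij : i ≠ j) (hik : i ≠ k) (hjk : j ≠ k) :
    cross (Bpt n i) (Bpt n j) (Bpt n k) ≠ 0 := by
  have h : cross (Bpt n i) (Bpt n j) (Bpt n k)
      = ((j:ℝ)-i) * ((k:ℝ)-i) * ((k:ℝ)-(j:ℝ)) := by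
    simp only [cross, Bpt]; ring
  rw [h]
  have h1 : (j:ℝ) - i ≠ 0 := sub_ne_zero.2 (by exact_mod_cast hij.symm)
  have h2 : (k:ℝ) - i ≠ 0 := sub_ne_zero.2 (by exact_mod_cast hik.symm)
  have h3 : (k:ℝ) - j ≠ 0 := sub_ne_zero.2 (by exact_mod_cast hjk.symm)
  exact mul_ne_zero (mul_ne_zero h1 h2) h3

-- set permutation lemmas
lemma set_rot {α : Type*} (p q r : α) : ({p,q,r} : Set α) = {q,r,p} := by
  ext; simp; tauto
lemma set_swap23 {α : Type*} (p q r : α) : ({p,q,r} : Set α) = {p,r,q} := by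
  ext; simp; tauto
lemma set_swap12 {α : Type*} (p q r : α) : ({p,q,r} : Set α) = {q,p,r} := by
  ext; simp; tauto
lemma set_rot2 {α : Type*} (p q r : α) : ({p,q,r} : Set α) = {r,p,q} := by
  ext; simp; tauto

lemma mem_S {n : ℕ} {p : ℝ×ℝ} (hp : p ∈ Sset n) :
    (∃ i, 1 ≤ i ∧ i ≤ n/2 ∧ p = Apt i) ∨ (∃ i, 1 ≤ i ∧ i ≤ (n+1)/2 ∧ p = Bpt n i) := by
  simp only [Sset, Finset.mem_union, Aset, Bset, Finset.mem_image, Finset.mem_Icc] at hp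
  rcases hp with ⟨i, ⟨h1, h2⟩, h3⟩ | ⟨i, ⟨h1, h2⟩, h3⟩
  · exact Or.inl ⟨i, h1, h2, h3.symm⟩
  · exact Or.inr ⟨i, h1, h2, h3.symm⟩

lemma genPos_S (n : ℕ) : GenPos (Sset n) := by
  intro p hp q hq r hr hpq hpr hqr
  rcases mem_S hp with ⟨i, hi1, hi2, rfl⟩ | ⟨i, hi1, hi2, rfl⟩ <;>
  rcases mem_S hq with ⟨j, hj1, hj2, rfl⟩ | ⟨j, hj1, hj2, rfl⟩ <;>
  rcases mem_S hr with ⟨k, hk1, hk2, rfl⟩ | ⟨k, hk1, hk2, rfl⟩ <;> intro hcol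
  · exact nz_AAA (fun h => hpq (by rw [h])) (fun h => hpr (by rw [h]))
      (fun h => hqr (by rw [h])) (collinear_cross hcol)
  · obtain ⟨hi1', hi2'⟩ := idx_bounds (n:=n) hi1 (by omega)
    obtain ⟨hj1', hj2'⟩ := idx_bounds (n:=n) hj1 (by omega)
    obtain ⟨hk1', hk2'⟩ := idx_bounds (n:=n) hk1 hk2
    exact nz_AAB (fun h => hpq (by rw [h])) hi1' hi2' hj1' hj2' hk1' hk2'
      (collinear_cross hcol)
  · rw [set_swap23] at hcol
    obtain ⟨hi1', hi2'⟩ := idx_bounds (n:=n) hi1 (by omega)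
    obtain ⟨hj1', hj2'⟩ := idx_bounds (n:=n) hj1 hj2
    obtain ⟨hk1', hk2'⟩ := idx_bounds (n:=n) hk1 (by omega)
    exact nz_AAB (fun h => hpr (by rw [h])) hi1' hi2' hk1' hk2' hj1' hj2'
      (collinear_cross hcol)
  · obtain ⟨hi1', hi2'⟩ := idx_bounds (n:=n) hi1 (by omega)
    obtain ⟨hj1', hj2'⟩ := idx_bounds (n:=n) hj1 hj2
    obtain ⟨hk1', hk2'⟩ := idx_bounds (n:=n) hk1 hk2
    exact nz_ABB (fun h => hqr (by rw [h])) hj1' hj2' hk1' hk2' hi1' hi2'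
      (collinear_cross hcol)
  · rw [set_rot] at hcol
    obtain ⟨hi1', hi2'⟩ := idx_bounds (n:=n) hi1 hi2
    obtain ⟨hj1', hj2'⟩ := idx_bounds (n:=n) hj1 (by omega)
    obtain ⟨hk1', hk2'⟩ := idx_bounds (n:=n) hk1 (by omega)
    exact nz_AAB (fun h => hqr (by rw [h])) hj1' hj2' hk1' hk2' hi1' hi2'
      (collinear_cross hcol)
  · rw [set_swap12] at hcol
    obtain ⟨hi1', hi2'⟩ := idx_bounds (n:=n) hi1 hi2
    obtain ⟨hj1', hj2'⟩ := idx_bounds (n:=n) hj1 (by omega)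
    obtain ⟨hk1', hk2'⟩ := idx_bounds (n:=n) hk1 hk2
    exact nz_ABB (fun h => hpr (by rw [h])) hi1' hi2' hk1' hk2' hj1' hj2'
      (collinear_cross hcol)
  · rw [set_rot2] at hcol
    obtain ⟨hi1', hi2'⟩ := idx_bounds (n:=n) hi1 hi2
    obtain ⟨hj1', hj2'⟩ := idx_bounds (n:=n) hj1 hj2
    obtain ⟨hk1', hk2'⟩ := idx_bounds (n:=n) hk1 (by omega)
    exact nz_ABB (fun h => hpq (by rw [h])) hi1' hi2' hj1' hj2' hk1' hk2'
      (collinear_cross hcol)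
  · exact nz_BBB (fun h => hpq (by rw [h])) (fun h => hpr (by rw [h]))
      (fun h => hqr (by rw [h])) (collinear_cross hcol)
lemma exists_triple {s : Finset ℕ} (h : 3 ≤ s.card) :
    ∃ i ∈ s, ∃ j ∈ s, ∃ k ∈ s, i < j ∧ j < k := by
  have hne : s.Nonempty := Finset.card_pos.1 (by omega)
  set i := s.min' hne with hi
  have his : i ∈ s := s.min'_mem hne
  have h2 : 2 ≤ (s.erase i).card := by rw [Finset.card_erase_of_mem his]; omega
  have hne2 : (s.erase i).Nonempty := Finset.card_pos.1 (by omega)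
  set k := (s.erase i).max' hne2 with hk
  have hks : k ∈ s.erase i := Finset.max'_mem _ hne2
  have h1 : 1 ≤ ((s.erase i).erase k).card := by rw [Finset.card_erase_of_mem hks]; omega
  obtain ⟨j, hj⟩ := Finset.card_pos.1 (by omega : 0 < ((s.erase i).erase k).card)
  have hj1 : j ∈ s.erase i := Finset.mem_of_mem_erase hj
  refine ⟨i, his, j, Finset.mem_of_mem_erase hj1, k, Finset.mem_of_mem_erase hks, ?_, ?_⟩
  · exact lt_of_le_of_ne (Finset.min'_le s j (Finset.mem_of_mem_erase hj1))
      (Finset.ne_of_mem_erase hj1).symm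
  · exact lt_of_le_of_ne (Finset.le_max' _ j hj1) (Finset.ne_of_mem_erase hj)

lemma numConvex5_le (n : ℕ) :
    numConvex5 (Sset n) ≤ (n/2).choose 5 + ((n+1)/2).choose 5 := by
  classical
  unfold numConvex5
  have hsub : ((Sset n).powersetCard 5).filter
      (fun T => ∀ p ∈ T, p ∉ convexHull ℝ ((T.erase p : Finset (ℝ × ℝ)) : Set (ℝ × ℝ)))
      ⊆ (Aset n).powersetCard 5 ∪ (Bset n).powersetCard 5 := by
    intro T hT
    rw [Finset.mem_filter, Finset.mem_powersetCard] at hT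
    obtain ⟨⟨hTS, hT5⟩, hP⟩ := hT
    rw [Finset.mem_union, Finset.mem_powersetCard, Finset.mem_powersetCard]
    by_contra hcon
    push_neg at hcon
    obtain ⟨hcA, hcB⟩ := hcon
    have hnA : ¬ T ⊆ Aset n := fun h => (hcA h) hT5
    have hnB : ¬ T ⊆ Bset n := fun h => (hcB h) hT5
    have hTun : T ∩ Aset n ∪ T ∩ Bset n = T := by
      rw [← Finset.inter_union_distrib_left]
      exact Finset.inter_eq_left.2 hTS
    -- both intersections nonempty
    obtain ⟨pa, hpa⟩ := Finset.not_subset.1 hnB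
    obtain ⟨pb, hpb⟩ := Finset.not_subset.1 hnA
    have hpaA : pa ∈ T ∩ Aset n := by
      rcases mem_S (hTS hpa.1) with ⟨i, h1, h2, rfl⟩ | ⟨i, h1, h2, rfl⟩
      · exact Finset.mem_inter.2 ⟨hpa.1, by
          simp only [Aset, Finset.mem_image]; exact ⟨i, Finset.mem_Icc.2 ⟨h1, h2⟩, rfl⟩⟩
      · exact absurd (by
          simp only [Bset, Finset.mem_image]
          exact ⟨i, Finset.mem_Icc.2 ⟨h1, h2⟩, rfl⟩) hpa.2
    have hpbB : pb ∈ T ∩ Bset n := by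
      rcases mem_S (hTS hpb.1) with ⟨i, h1, h2, rfl⟩ | ⟨i, h1, h2, rfl⟩
      · exact absurd (by
          simp only [Aset, Finset.mem_image]
          exact ⟨i, Finset.mem_Icc.2 ⟨h1, h2⟩, rfl⟩) hpb.2
      · exact Finset.mem_inter.2 ⟨hpb.1, by
          simp only [Bset, Finset.mem_image]; exact ⟨i, Finset.mem_Icc.2 ⟨h1, h2⟩, rfl⟩⟩
    have hcardsum : 5 ≤ (T ∩ Aset n).card + (T ∩ Bset n).card := by
      calc 5 = T.card := hT5.symm
      _ = (T ∩ Aset n ∪ T ∩ Bset n).card := by rw [hTun]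
      _ ≤ _ := Finset.card_union_le _ _
    -- one side has ≥ 3 points
    rcases le_or_gt 3 (T ∩ Aset n).card with hA3 | hlt
    · -- three A points + one B point
      set IA := (Finset.Icc 1 (n/2)).filter (fun i => Apt i ∈ T) with hIA
      have himg : T ∩ Aset n = IA.image Apt := by
        ext p
        simp only [Finset.mem_inter, Aset, Finset.mem_image, Finset.mem_filter, hIA]
        constructor
        · rintro ⟨hpT, i, hi, rfl⟩; exact ⟨i, ⟨hi, hpT⟩, rfl⟩
        · rintro ⟨i, ⟨hi, hiT⟩, rfl⟩; exact ⟨hiT, i, hi, rfl⟩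
      have hIA3 : 3 ≤ IA.card := by
        rw [himg, Finset.card_image_of_injective _ Apt_inj] at hA3; exact hA3
      obtain ⟨i, hiI, j, hjI, k, hkI, hij, hjk⟩ := exists_triple hIA3
      simp only [hIA, Finset.mem_filter, Finset.mem_Icc] at hiI hjI hkI
      obtain ⟨x, hxIc, rfl⟩ : ∃ x ∈ Finset.Icc 1 ((n+1)/2), Bpt n x = pb := by
        have := (Finset.mem_inter.1 hpbB).2
        simpa only [Bset, Finset.mem_image] using this
      rw [Finset.mem_Icc] at hxIc
      have hmem : Apt j ∈ convexHull ℝ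
          ({Apt i, Apt k, Bpt n x} : Set (ℝ × ℝ)) := by
        have h1 : (1:ℝ) ≤ (i:ℝ) := by exact_mod_cast hiI.1.1
        have h2 : (i:ℝ) + 1 ≤ (j:ℝ) := by exact_mod_cast hij
        have h3 : (j:ℝ) + 1 ≤ (k:ℝ) := by exact_mod_cast hjk
        have h4 : (k:ℝ) ≤ (n:ℝ) := by
          have : k ≤ n := by omega
          exact_mod_cast this
        have h5 : (1:ℝ) ≤ (x:ℝ) := by exact_mod_cast hxIc.1
        have h6 : (x:ℝ) ≤ (n:ℝ) := by
          have : x ≤ n := by omega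
          exact_mod_cast this
        exact mid_mem_A n i j k x h1 h2 h3 h4 h5 h6
      have herase : ({Apt i, Apt k, Bpt n x} : Set (ℝ × ℝ)) ⊆ ↑(T.erase (Apt j)) := by
        intro p hp
        simp only [Set.mem_insert_iff, Set.mem_singleton_iff] at hp
        rcases hp with rfl | rfl | rfl
        · exact Finset.mem_coe.2 (Finset.mem_erase.2
            ⟨fun h => absurd (Apt_inj h) (by omega), hiI.2⟩)
        · exact Finset.mem_coe.2 (Finset.mem_erase.2
            ⟨fun h => absurd (Apt_inj h) (by omega), hkI.2⟩)
        · exact Finset.mem_coe.2 (Finset.mem_erase.2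
            ⟨fun h => (Apt_ne_Bpt n j x) h.symm, (Finset.mem_inter.1 hpbB).1⟩)
      exact hP (Apt j) hjI.2 (convexHull_mono herase hmem)
    · -- three B points + one A point
      have hB3 : 3 ≤ (T ∩ Bset n).card := by omega
      set IB := (Finset.Icc 1 ((n+1)/2)).filter (fun i => Bpt n i ∈ T) with hIB
      have himg : T ∩ Bset n = IB.image (Bpt n) := by
        ext p
        simp only [Finset.mem_inter, Bset, Finset.mem_image, Finset.mem_filter, hIB]
        constructor
        · rintro ⟨hpT, i, hi, rfl⟩; exact ⟨i, ⟨hi, hpT⟩, rfl⟩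
        · rintro ⟨i, ⟨hi, hiT⟩, rfl⟩; exact ⟨hiT, i, hi, rfl⟩
      have hIB3 : 3 ≤ IB.card := by
        rw [himg, Finset.card_image_of_injective _ (Bpt_inj n)] at hB3; exact hB3
      obtain ⟨i, hiI, j, hjI, k, hkI, hij, hjk⟩ := exists_triple hIB3
      simp only [hIB, Finset.mem_filter, Finset.mem_Icc] at hiI hjI hkI
      obtain ⟨x, hxIc, rfl⟩ : ∃ x ∈ Finset.Icc 1 (n/2), Apt x = pa := by
        have := (Finset.mem_inter.1 hpaA).2
        simpa only [Aset, Finset.mem_image] using this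
      rw [Finset.mem_Icc] at hxIc
      have hmem : Bpt n j ∈ convexHull ℝ
          ({Bpt n i, Bpt n k, Apt x} : Set (ℝ × ℝ)) := by
        have h1 : (1:ℝ) ≤ (i:ℝ) := by exact_mod_cast hiI.1.1
        have h2 : (i:ℝ) + 1 ≤ (j:ℝ) := by exact_mod_cast hij
        have h3 : (j:ℝ) + 1 ≤ (k:ℝ) := by exact_mod_cast hjk
        have h4 : (k:ℝ) ≤ (n:ℝ) := by
          have : k ≤ n := by omega
          exact_mod_cast this
        have h5 : (1:ℝ) ≤ (x:ℝ) := by exact_mod_cast hxIc.1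
        have h6 : (x:ℝ) ≤ (n:ℝ) := by
          have : x ≤ n := by omega
          exact_mod_cast this
        exact mid_mem_B n i j k x h1 h2 h3 h4 h5 h6
      have herase : ({Bpt n i, Bpt n k, Apt x} : Set (ℝ × ℝ)) ⊆ ↑(T.erase (Bpt n j)) := by
        intro p hp
        simp only [Set.mem_insert_iff, Set.mem_singleton_iff] at hp
        rcases hp with rfl | rfl | rfl
        · exact Finset.mem_coe.2 (Finset.mem_erase.2
            ⟨fun h => absurd (Bpt_inj n h) (by omega), hiI.2⟩)
        · exact Finset.mem_coe.2 (Finset.mem_erase.2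
            ⟨fun h => absurd (Bpt_inj n h) (by omega), hkI.2⟩)
        · exact Finset.mem_coe.2 (Finset.mem_erase.2
            ⟨Apt_ne_Bpt n x j, (Finset.mem_inter.1 hpaA).1⟩)
      exact hP (Bpt n j) hjI.2 (convexHull_mono herase hmem)
  calc _ ≤ ((Aset n).powersetCard 5 ∪ (Bset n).powersetCard 5).card :=
        Finset.card_le_card hsub
    _ ≤ ((Aset n).powersetCard 5).card + ((Bset n).powersetCard 5).card :=
        Finset.card_union_le _ _
    _ = (n/2).choose 5 + ((n+1)/2).choose 5 := by
        rw [Finset.card_powersetCard, Finset.card_powersetCard, Aset_card, Bset_card]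

theorem mu5_upper_bound (n : ℕ) :
    mu5 n ≤ (n / 2).choose 5 + ((n + 1) / 2).choose 5 := by
  have h1 : mu5 n ≤ numConvex5 (Sset n) :=
    Nat.sInf_le ⟨Sset n, Sset_card n, genPos_S n, rfl⟩
  exact le_trans h1 (numConvex5_le n)
end
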